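/- Fix τ̄ ∈ [0,π/2) and let l_τ̄(ω) = arccos √(sin²ω − √2·tan(τ̄)·sin ω·cos ω) for ω ∈ (arctan(√2·tan τ̄), π/2). Then l_τ̄ is differentiable on its domain, l_τ̄'(ω) < 0, and |l_τ̄'(ω)| ≥ 1 for every ω in the domain; moreover |l_τ̄'(ω)| > 1 for every ω in the domain when τ̄ > 0. -/

import Mathlib

open Real

/-- The function `l_τ̄(ω) = arccos √(sin²ω − √2·tan τ̄·sin ω·cos ω)` parameterizing the
level curve `τ = τ̄` of the angle function. -/
noncomputable def ltau (τ ω : ℝ) : ℝ :=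
  Real.arccos
    (Real.sqrt (Real.sin ω ^ 2 - Real.sqrt 2 * Real.tan τ * Real.sin ω * Real.cos ω))

/-!
With `t = √2 tan τ̄` and `R = sin²ω − t sin ω cos ω`, the chain rule gives
`l_τ̄' = −R' / (2√(R(1 − R)))`, and the derivative `R' = 2 sin ω cos ω − t (cos²ω − sin²ω)`
satisfies the identity `R'² = 4R(1 − R) + t²`. Hence `|l_τ̄'| = R' / √(R'² − t²) ≥ 1`,
with strict inequality exactly when `t ≠ 0`, i.e. when `τ̄ > 0`.
-/

theorem HasDerivAt.arccos_sqrt {f : ℝ → ℝ} {f' x : ℝ} (hf : HasDerivAt f f' x)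
    (h₀ : 0 < f x) (h₁ : f x < 1) :
    HasDerivAt (fun y => arccos √(f y)) (-(f' / (2 * √(f x * (1 - f x))))) x := by
  have hsqrt_lt_one : √(f x) < 1 := by simpa using sqrt_lt_sqrt h₀.le h₁
  refine ((hasDerivAt_arccos (by linarith [sqrt_nonneg (f x)]) hsqrt_lt_one.ne).comp x
    (hf.sqrt h₀.ne')).congr_deriv ?_
  rw [sq_sqrt h₀.le, sqrt_mul h₀.le]
  field_simp

theorem one_le_div_two_mul_sqrt {a q t : ℝ} (ha : 0 ≤ a) (hq : 0 < q)
    (h : a ^ 2 = 4 * q + t ^ 2) : 1 ≤ a / (2 * √q) := by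
  rw [one_le_div (by positivity)]
  refine le_of_pow_le_pow_left₀ two_ne_zero ha ?_
  rw [mul_pow, sq_sqrt hq.le, h]
  nlinarith [sq_nonneg t]

theorem one_lt_div_two_mul_sqrt {a q t : ℝ} (ha : 0 ≤ a) (hq : 0 < q)
    (h : a ^ 2 = 4 * q + t ^ 2) (ht : t ≠ 0) : 1 < a / (2 * √q) := by
  rw [one_lt_div (by positivity)]
  refine lt_of_pow_lt_pow_left₀ 2 ha ?_
  rw [mul_pow, sq_sqrt hq.le, h]
  nlinarith [sq_pos_of_ne_zero ht]

theorem mul_cos_lt_sin_of_arctan_lt {t ω : ℝ} (hlo : arctan t < ω) (hhi : ω < π / 2) :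
    t * cos ω < sin ω := by
  have hcos : 0 < cos ω := cos_pos_of_mem_Ioo ⟨(neg_pi_div_two_lt_arctan t).trans hlo, hhi⟩
  have htan : t < tan ω := by
    simpa using tan_lt_tan_of_lt_of_lt_pi_div_two (neg_pi_div_two_lt_arctan t) hhi hlo
  rwa [tan_eq_sin_div_cos, lt_div_iff₀ hcos] at htan

namespace Ltau

noncomputable def radicand (t ω : ℝ) : ℝ := sin ω ^ 2 - t * sin ω * cos ω

noncomputable def radicandDeriv (t ω : ℝ) : ℝ :=
  2 * sin ω * cos ω - t * (cos ω ^ 2 - sin ω ^ 2)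

theorem ltau_eq (τ : ℝ) : ltau τ = fun ω => arccos √(radicand (√2 * tan τ) ω) := rfl

theorem hasDerivAt_radicand (t ω : ℝ) : HasDerivAt (radicand t) (radicandDeriv t ω) ω := by
  have hsq : HasDerivAt (fun x => sin x ^ 2) (2 * sin ω * cos ω) ω := by
    simpa using (hasDerivAt_sin ω).fun_pow 2
  have hprod := ((hasDerivAt_sin ω).const_mul t).mul (hasDerivAt_cos ω)
  refine (hsq.fun_sub hprod).congr_deriv ?_
  rw [radicandDeriv]
  ring

theorem radicandDeriv_sq (t ω : ℝ) :
    radicandDeriv t ω ^ 2 = 4 * (radicand t ω * (1 - radicand t ω)) + t ^ 2 := by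
  rw [radicandDeriv, radicand]
  linear_combination (t ^ 2 * (sin ω ^ 2 + cos ω ^ 2 + 1) - 4 * sin ω * cos ω * t
    + 4 * sin ω ^ 2) * sin_sq_add_cos_sq ω

theorem radicand_pos {t ω : ℝ} (hs : 0 < sin ω) (htcs : t * cos ω < sin ω) :
    0 < radicand t ω := by
  have : radicand t ω = sin ω * (sin ω - t * cos ω) := by rw [radicand]; ring
  rw [this]
  exact mul_pos hs (sub_pos.2 htcs)

theorem radicand_lt_one {t ω : ℝ} (ht : 0 ≤ t) (hs : 0 < sin ω) (hc : 0 < cos ω) :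
    radicand t ω < 1 := by
  rw [radicand]
  nlinarith [sin_sq_add_cos_sq ω, mul_nonneg (mul_nonneg ht hs.le) hc.le]

theorem radicandDeriv_pos {t ω : ℝ} (ht : 0 ≤ t) (hs : 0 < sin ω) (hc : 0 < cos ω)
    (htcs : t * cos ω < sin ω) : 0 < radicandDeriv t ω := by
  rw [radicandDeriv]
  rcases le_or_gt (cos ω ^ 2) (sin ω ^ 2) with h | h
  · nlinarith [mul_pos hs hc, mul_nonneg ht (sub_nonneg.2 h)]
  · -- multiplying by `cos ω` and using `t cos ω < sin ω` leaves `sin ω (sin²ω + cos²ω) > 0`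
    nlinarith [mul_pos (sub_pos.2 htcs) (sub_pos.2 h), mul_pos hs hc]

end Ltau

open Ltau in
/-- on `(arctan(√2 tan τ̄), π/2)`, `l_τ̄` is differentiable with negative
derivative of absolute value at least `1`, strictly greater than `1` when `τ̄ > 0`. -/
theorem stmt12 (τ : ℝ) (hτ : τ ∈ Set.Ico 0 (π/2)) :
    ∀ ω ∈ Set.Ioo (Real.arctan (Real.sqrt 2 * Real.tan τ)) (π/2),
      DifferentiableAt ℝ (ltau τ) ω ∧
      deriv (ltau τ) ω < 0 ∧
      1 ≤ |deriv (ltau τ) ω| ∧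
      (0 < τ → 1 < |deriv (ltau τ) ω|) := by
  rintro ω ⟨hlo, hhi⟩
  set t := √2 * tan τ
  have ht : 0 ≤ t :=
    mul_nonneg (sqrt_nonneg 2) (tan_nonneg_of_nonneg_of_le_pi_div_two hτ.1 hτ.2.le)
  have hω : 0 < ω := (arctan_nonneg.2 ht).trans_lt hlo
  have hs : 0 < sin ω := sin_pos_of_pos_of_lt_pi hω (by linarith [pi_pos])
  have hc : 0 < cos ω := cos_pos_of_mem_Ioo ⟨by linarith [pi_pos], hhi⟩
  have htcs : t * cos ω < sin ω := mul_cos_lt_sin_of_arctan_lt hlo hhi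
  have hR₀ := radicand_pos hs htcs
  have hR₁ := radicand_lt_one ht hs hc
  have hD := radicandDeriv_pos ht hs hc htcs
  have hq : 0 < radicand t ω * (1 - radicand t ω) := mul_pos hR₀ (sub_pos.2 hR₁)
  have hl := (hasDerivAt_radicand t ω).arccos_sqrt hR₀ hR₁
  rw [← ltau_eq] at hl
  have habs : |deriv (ltau τ) ω| =
      radicandDeriv t ω / (2 * √(radicand t ω * (1 - radicand t ω))) := by
    rw [hl.deriv, abs_neg, abs_of_pos (by positivity)]
  refine ⟨hl.differentiableAt, hl.deriv ▸ neg_neg_of_pos (by positivity),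
    habs ▸ one_le_div_two_mul_sqrt hD.le hq (radicandDeriv_sq t ω), fun hτ₀ => ?_⟩
  have htpos : 0 < t :=
    mul_pos (sqrt_pos.2 two_pos) (tan_pos_of_pos_of_lt_pi_div_two hτ₀ hτ.2)
  exact habs ▸ one_lt_div_two_mul_sqrt hD.le hq (radicandDeriv_sq t ω) htpos.ne'
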